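/- arXiv:2312.01880 — 3 statements merged into one kernel-verified Lean document; each statement's English description precedes it below -/
import Mathlib

section
/- Every stable matching is popular: if M is a matching in a graph G with strict preferences over neighbors at every node such that no edge of G blocks M (i.e., no edge uv outside M with both u preferring v to M(u) and v preferring u to M(v), where being matched is preferred to being unmatched), then no matching M' is preferred by strictly more nodes than the number of nodes preferring M. -/
open Finset
open scoped Classical

noncomputable section

/-- A (partial) matching on a graph, given as a symmetric partner function. -/
def IsMatchingOn {W : Type*} (H : SimpleGraph W) (f : W → Option W) : Prop :=
  (∀ v w, f v = some w → f w = some v) ∧ (∀ v w, f v = some w → H.Adj v w)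

/-- Number of matched vertices of a partner function. -/
def msize {W : Type*} [Fintype W] (f : W → Option W) : ℕ :=
  (Finset.univ.filter (fun x => f x ≠ none)).card

/-- f is a maximum-size matching on H. -/
def MaxMatchingOn {W : Type*} [Fintype W] (H : SimpleGraph W) (f : W → Option W) : Prop :=
  IsMatchingOn H f ∧ ∀ g, IsMatchingOn H g → msize g ≤ msize f

variable {V : Type*} [Fintype V] [DecidableEq V]

/-- Rank of a situation (partner or unmatched); smaller is better, being
unmatched is worst (any neighbor is preferred to being unmatched). -/
def rkv (rank : V → V → ℕ) (v : V) : Option V → WithTop ℕ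
  | none => ⊤
  | some w => (rank v w : WithTop ℕ)

/-- vote of v comparing situation s to situation t: +1 if v prefers s, -1 if v prefers t. -/
def vote (rank : V → V → ℕ) (v : V) (s t : Option V) : ℤ :=
  if rkv rank v s < rkv rank v t then 1 else if rkv rank v t < rkv rank v s then -1 else 0

variable (G : SimpleGraph V) (rank : V → V → ℕ)

/-- The preferences are strict (a linear order) on the neighbors of each node. -/
def StrictPrefs : Prop := ∀ u v w, G.Adj u v → G.Adj u w → rank u v = rank u w → v = w

/-- g is more popular than f : strictly more nodes prefer g than prefer f. -/
def MorePopular (g f : V → Option V) : Prop :=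
  (Finset.univ.filter (fun v => rkv rank v (g v) < rkv rank v (f v))).card >
  (Finset.univ.filter (fun v => rkv rank v (f v) < rkv rank v (g v))).card

/-- f is popular: no matching is more popular than f. -/
def PopularM (f : V → Option V) : Prop :=
  ∀ g, IsMatchingOn G g → ¬ MorePopular rank g f

/-- uv is a blocking edge for matching f. -/
def BlockingEdge (f : V → Option V) (u v : V) : Prop :=
  G.Adj u v ∧ f u ≠ some v ∧
    rkv rank u (some v) < rkv rank u (f u) ∧ rkv rank v (some u) < rkv rank v (f v)

/-- Vote based weight of an edge uv. -/
def wE (f : V → Option V) (u v : V) : ℤ :=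
  vote rank u (some v) (f u) + vote rank v (some u) (f v)

/-- Vote based weight of the loop at u. -/
def wL (f : V → Option V) (u : V) : ℤ := if f u = none then 0 else -1

/-- G_M : G minus the edges of weight -2. -/
def GMgraph (f : V → Option V) : SimpleGraph V where
  Adj u v := G.Adj u v ∧ wE rank f u v ≠ -2
  symm := by
    constructor
    intro u v h
    refine ⟨h.1.symm, ?_⟩
    have h2 := h.2
    simp only [wE] at h2 ⊢
    omega
  loopless := ⟨fun v h => G.irrefl h.1⟩

/-- An M-alternating path p 0, p 1, ..., p n (n edges) in graph H with matching f. -/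
def AltPath {W : Type*} (H : SimpleGraph W) (f : W → Option W) (p : ℕ → W) (n : ℕ) : Prop :=
  (∀ i j, i ≤ n → j ≤ n → p i = p j → i = j) ∧
  (∀ i, i < n → H.Adj (p i) (p (i + 1))) ∧
  (∀ i, i + 1 < n → (f (p i) = some (p (i + 1)) ↔ ¬ f (p (i + 1)) = some (p (i + 2))))

/-- An M-alternating cycle p 0, ..., p n = p 0 (n edges, n even), with
matching edges at odd positions. -/
def AltCycle {W : Type*} (H : SimpleGraph W) (f : W → Option W) (p : ℕ → W) (n : ℕ) : Prop :=
  4 ≤ n ∧ Even n ∧ p n = p 0 ∧ (∀ i j, i < n → j < n → p i = p j → i = j) ∧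
  (∀ i, i < n → H.Adj (p i) (p (i + 1))) ∧
  (∀ i, i < n → (f (p i) = some (p (i + 1)) ↔ Odd i))

/-- Blocking structure (i): an alternating cycle in G_M with a blocking edge. -/
def StructI (f : V → Option V) : Prop :=
  ∃ (p : ℕ → V) (n : ℕ), AltCycle (GMgraph G rank f) f p n ∧
    ∃ i, i < n ∧ BlockingEdge G rank f (p i) (p (i + 1))

/-- Blocking structure (ii): an alternating path in G_M whose first and last
edges are two disjoint blocking edges. -/
def StructII (f : V → Option V) : Prop :=
  ∃ (p : ℕ → V) (n : ℕ), 3 ≤ n ∧ AltPath (GMgraph G rank f) f p n ∧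
    BlockingEdge G rank f (p 0) (p 1) ∧ BlockingEdge G rank f (p (n - 1)) (p n)

/-- Blocking structure (iii): an alternating path in G_M from an unmatched node
ending in a blocking edge. -/
def StructIII (f : V → Option V) : Prop :=
  ∃ (p : ℕ → V) (n : ℕ), 1 ≤ n ∧ AltPath (GMgraph G rank f) f p n ∧ f (p 0) = none ∧
    BlockingEdge G rank f (p (n - 1)) (p n)

/-- Vertex set of the auxiliary graph G_M^* : original nodes, blocking nodes b_v,
star nodes b_S (indexed by the middle node of the star), and the contracted node u. -/
abbrev Vstar (V : Type*) := V ⊕ V ⊕ V ⊕ Unit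

def origV : V → Vstar V := Sum.inl
def bNodeV : V → Vstar V := fun v => Sum.inr (Sum.inl v)
def sNodeV : V → Vstar V := fun v => Sum.inr (Sum.inr (Sum.inl v))
def uNode : Vstar V := Sum.inr (Sum.inr (Sum.inr ()))

/-- v is an endpoint of some blocking edge. -/
def IsBlockEnd (f : V → Option V) (v : V) : Prop := ∃ w, BlockingEdge G rank f v w

/-- v is a leaf node: incident to exactly one blocking edge. -/
def IsLeafNode (f : V → Option V) (v : V) : Prop := ∃! w, BlockingEdge G rank f v w

/-- v is a leaf of a star: a leaf node whose unique blocking neighbor z also has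
another leaf node attached by a blocking edge. -/
def IsStarLeaf (f : V → Option V) (v : V) : Prop :=
  IsLeafNode G rank f v ∧ ∃ z, BlockingEdge G rank f v z ∧
    ∃ v', v' ≠ v ∧ IsLeafNode G rank f v' ∧ BlockingEdge G rank f v' z

/-- The (unique) blocking neighbor of a leaf node. -/
def midOf (f : V → Option V) (v : V) : V :=
  if h : ∃ z, BlockingEdge G rank f v z then h.choose else v

/-- b(v): the auxiliary unmatched node attached to the blocking-edge endpoint v. -/
def bmap (f : V → Option V) (v : V) : Vstar V :=
  if IsStarLeaf G rank f v then sNodeV (midOf G rank f v) else bNodeV v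

/-- Projection of an original node into G_M^*: unmatched nodes are contracted to u. -/
def projV (f : V → Option V) (v : V) : Vstar V :=
  if f v = none then uNode else origV v

/-- Underlying (asymmetric) edge description of G_M^*. -/
def starRel (f : V → Option V) (x y : Vstar V) : Prop :=
  (∃ v w, (GMgraph G rank f).Adj v w ∧ ¬ BlockingEdge G rank f v w ∧
    x = projV f v ∧ y = projV f w) ∨
  (∃ v, IsBlockEnd G rank f v ∧ x = projV f v ∧ y = bmap G rank f v)

/-- The auxiliary graph G_M^*. -/
def GMstar (f : V → Option V) : SimpleGraph (Vstar V) where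
  Adj x y := x ≠ y ∧ (starRel G rank f x y ∨ starRel G rank f y x)
  symm := ⟨fun x y h => ⟨h.1.symm, h.2.symm⟩⟩
  loopless := ⟨fun x h => h.1 rfl⟩

/-- The matching M viewed in G_M^*. -/
def fstar (f : V → Option V) : Vstar V → Option (Vstar V)
  | Sum.inl v => (f v).map Sum.inl
  | _ => none

/-- The dual objective of LP2. -/
def dualObj (α : V → ℝ) (y : Finset V → ℝ) : ℝ :=
  (∑ v, α v) +
    ∑ Z ∈ Finset.univ.filter (fun Z : Finset V => Odd Z.card), ((Z.card - 1 : ℝ) / 2) * y Z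

/-- Feasibility for LP2, the dual of the fractional matching LP with odd set constraints. -/
def DualFeasible (f : V → Option V) (α : V → ℝ) (y : Finset V → ℝ) : Prop :=
  (∀ v w, G.Adj v w →
    (wE rank f v w : ℝ) ≤ α v + α w +
      ∑ Z ∈ Finset.univ.filter (fun Z : Finset V => Odd Z.card ∧ v ∈ Z ∧ w ∈ Z), y Z) ∧
  (∀ v, (wL f v : ℝ) ≤ α v) ∧ (∀ Z, 0 ≤ y Z)

/-- A feasible solution of LP1: a fractional matching of G~ (loops allowed)
satisfying the odd-set constraints.  `x v v` is the value of the loop at v. -/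
def PrimalFeasible (x : V → V → ℝ) : Prop :=
  (∀ v w, x v w = x w v) ∧ (∀ v w, 0 ≤ x v w) ∧
  (∀ v w, v ≠ w → ¬ G.Adj v w → x v w = 0) ∧
  (∀ v, ∑ w, x v w = 1) ∧
  (∀ Z : Finset V, Odd Z.card →
    (∑ v ∈ Z, ∑ w ∈ Z, if v ≠ w then x v w else 0) ≤ (Z.card - 1 : ℝ))

/-- The w_M-value of a fractional matching x of G~. -/
def primalVal (f : V → Option V) (x : V → V → ℝ) : ℝ :=
  (∑ v, ∑ w, if v ≠ w then (wE rank f v w : ℝ) * x v w else 0) / 2 +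
    ∑ v, (wL f v : ℝ) * x v v

/-- A fractional matching of G~ (no odd-set constraints). -/
def FracMatching (x : V → V → ℝ) : Prop :=
  (∀ v w, x v w = x w v) ∧ (∀ v w, 0 ≤ x v w) ∧
  (∀ v w, v ≠ w → ¬ G.Adj v w → x v w = 0) ∧ (∀ v, ∑ w, x v w = 1)

/-- f is fractional popular ("truly popular"): no fractional matching has positive w_M-value. -/
def FracPopular (f : V → Option V) : Prop :=
  ∀ x, FracMatching G x → primalVal rank f x ≤ 0

/-- x is missed by some maximum matching of H (x is in the Gallai-Edmonds set D). -/
def Exposable {W : Type*} [Fintype W] (H : SimpleGraph W) (x : W) : Prop :=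
  ∃ g, MaxMatchingOn H g ∧ g x = none

/-- Reachability inside the set P by a walk of H. -/
def ReachWithin {W : Type*} (H : SimpleGraph W) (P : W → Prop) (x y : W) : Prop :=
  ∃ (p : ℕ → W) (n : ℕ), p 0 = x ∧ p n = y ∧ (∀ i, i ≤ n → P (p i)) ∧ ∀ i, i < n → H.Adj (p i) (p (i + 1))

/-- X: nodes of G_M^* reachable from blocking or star nodes on an alternating path. -/
def ReachX (f : V → Option V) (x : Vstar V) : Prop :=
  ∃ (p : ℕ → Vstar V) (n : ℕ), AltPath (GMstar G rank f) (fstar f) p n ∧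
    (∃ v, IsBlockEnd G rank f v ∧ p 0 = bmap G rank f v) ∧ p n = x

/-- K is a connected component of G_M^*[X ∩ D]. -/
def IsCompXD (f : V → Option V) (K : Finset (Vstar V)) : Prop :=
  K.Nonempty ∧
  (∀ x ∈ K, ReachX G rank f x ∧ Exposable (GMstar G rank f) x) ∧
  (∀ x ∈ K, ∀ y, ReachX G rank f y → Exposable (GMstar G rank f) y →
    (GMstar G rank f).Adj x y → y ∈ K) ∧
  (∀ x ∈ K, ∀ y ∈ K,
    ReachWithin (GMstar G rank f) (fun z => ReachX G rank f z ∧ Exposable (GMstar G rank f) z) x y)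

/-- The α of the dual witness constructed from the Gallai-Edmonds decomposition of G_M^*. -/
def alphaGE (f : V → Option V) (v : V) : ℝ :=
  if ReachX G rank f (origV v) ∧ Exposable (GMstar G rank f) (origV v) then -1
  else if ReachX G rank f (origV v) ∧ ¬ Exposable (GMstar G rank f) (origV v) ∧
      (∃ y, Exposable (GMstar G rank f) y ∧ (GMstar G rank f).Adj (origV v) y) then 1
  else 0

/-- The odd set of original nodes arising from a component K of G_M^*[X∩D]:
original members of K, with a star-node root replaced by the middle node of its star. -/
def ZofK (K : Finset (Vstar V)) : Finset V :=
  Finset.univ.filter (fun v => origV v ∈ K ∨ sNodeV v ∈ K)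

/-- The y of the dual witness constructed from the Gallai-Edmonds decomposition. -/
def yGE (f : V → Option V) (Z : Finset V) : ℝ :=
  if ∃ K, IsCompXD G rank f K ∧ 3 ≤ K.card ∧ Z = ZofK K then 2 else 0

end

/-!
The number of nodes preferring a matching `g` to the stable matching `f`, minus the number
preferring `f`, is the sum of the votes `vote v (g v) (f v)`. Pair each node with its partner in
`g` (an unmatched node with itself): an unmatched node never prefers `g`, and on an edge `uv` of `g`
outside `f` strict preferences make both votes nonzero while stability forbids both being `+1`.
So every pair contributes at most `0`, and so does the whole sum.
-/

theorem sum_nonpos_of_involutive {α β : Type*} [Fintype α] [AddCommGroup β] [LinearOrder β]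
    [IsOrderedAddMonoid β] {σ : α → α} (hσ : Function.Involutive σ) {h : α → β}
    (hpair : ∀ a, h a + h (σ a) ≤ 0) : ∑ a, h a ≤ 0 := by
  have hdouble : ∑ a, h a + ∑ a, h a ≤ 0 := calc
    ∑ a, h a + ∑ a, h a = ∑ a, h a + ∑ a, h (σ a) := by
      rw [← Equiv.sum_comp hσ.toPerm h]; rfl
    _ = ∑ a, (h a + h (σ a)) := Finset.sum_add_distrib.symm
    _ ≤ 0 := Finset.sum_nonpos fun a _ => hpair a
  by_contra! hpos
  exact (add_pos hpos hpos).not_ge hdouble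

theorem involutive_getD_self_of_symm {α : Type*} {g : α → Option α}
    (hg : ∀ v w, g v = some w → g w = some v) : Function.Involutive fun v => (g v).getD v := by
  intro v
  cases hv : g v with
  | none => simp [hv]
  | some w => simp [hv, hg v w hv]

section Votes

variable {V : Type*}

theorem vote_none_nonpos (rank : V → V → ℕ) (v : V) (s : Option V) : vote rank v none s ≤ 0 := by
  have : ¬ rkv rank v none < rkv rank v s := not_top_lt
  simp only [vote, this, if_false]
  split_ifs <;> decide

theorem sum_vote_eq_card_sub_card [Fintype V] (rank : V → V → ℕ) (g f : V → Option V) :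
    ∑ v, vote rank v (g v) (f v) =
      (#{v | rkv rank v (g v) < rkv rank v (f v)} : ℤ) - #{v | rkv rank v (f v) < rkv rank v (g v)} := by
  rw [Finset.card_filter, Finset.card_filter]
  push_cast
  rw [← Finset.sum_sub_distrib]
  refine Finset.sum_congr rfl fun v _ => ?_
  have := lt_asymm (a := rkv rank v (g v)) (b := rkv rank v (f v))
  unfold vote
  split_ifs <;> simp_all

variable {G : SimpleGraph V} {rank : V → V → ℕ} {f : V → Option V}

theorem vote_ne_zero (hstrict : StrictPrefs G rank) (hM : IsMatchingOn G f) {u v : V}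
    (hadj : G.Adj u v) (hne : f u ≠ some v) : vote rank u (some v) (f u) ≠ 0 := by
  have htie : rkv rank u (some v) ≠ rkv rank u (f u) := by
    cases hfu : f u with
    | none => simp [rkv]
    | some w =>
      rw [hfu] at hne
      simp only [rkv, ne_eq, Nat.cast_inj]
      exact fun h => hne (congrArg some ((hstrict u v w hadj (hM.2 u w hfu) h).symm))
  unfold vote
  split_ifs with hlt hgt
  · decide
  · decide
  · exact absurd (le_antisymm (not_lt.1 hgt) (not_lt.1 hlt)) htie

theorem vote_add_vote_nonpos (hstrict : StrictPrefs G rank) (hM : IsMatchingOn G f) {u v : V}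
    (hadj : G.Adj u v) (hnb : ¬ BlockingEdge G rank f u v) :
    vote rank u (some v) (f u) + vote rank v (some u) (f v) ≤ 0 := by
  by_cases hfu : f u = some v
  · simp [vote, hfu, hM.1 u v hfu]
  have hfv : f v ≠ some u := fun h => hfu (hM.1 v u h)
  have hu := vote_ne_zero hstrict hM hadj hfu
  have hv := vote_ne_zero hstrict hM hadj.symm hfv
  unfold vote at hu hv ⊢
  split_ifs at hu hv ⊢ <;> first | omega | exact absurd ⟨hadj, hfu, ‹_›, ‹_›⟩ hnb

end Votes

theorem stable_implies_popular_general {V : Type*} [Fintype V]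
    (G : SimpleGraph V) (rank : V → V → ℕ) (hstrict : StrictPrefs G rank)
    (f : V → Option V) (hM : IsMatchingOn G f)
    (hstable : ∀ u v, ¬ BlockingEdge G rank f u v) :
    PopularM G rank f := by
  intro g hg hmore
  set partner : V → V := fun v => (g v).getD v with hpartner
  have hpair : ∀ v, vote rank v (g v) (f v) +
      vote rank (partner v) (g (partner v)) (f (partner v)) ≤ 0 := by
    intro v
    cases hv : g v with
    | none =>
      have hnone := vote_none_nonpos rank v (f v)
      simpa [hpartner, hv] using add_nonpos hnone hnone
    | some w =>
      simpa [hpartner, hv, hg.1 v w hv] using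
        vote_add_vote_nonpos hstrict hM (hg.2 v w hv) (hstable v w)
  have hsum := sum_nonpos_of_involutive (involutive_getD_self_of_symm hg.1)
    (h := fun v => vote rank v (g v) (f v)) hpair
  rw [sum_vote_eq_card_sub_card] at hsum
  unfold MorePopular at hmore
  omega

/-- every stable matching is popular. -/
theorem stable_implies_popular {V : Type*} [Fintype V] [DecidableEq V]
    (G : SimpleGraph V) (rank : V → V → ℕ) (hstrict : StrictPrefs G rank)
    (f : V → Option V) (hM : IsMatchingOn G f)
    (hstable : ∀ u v, ¬ BlockingEdge G rank f u v) :
    PopularM G rank f :=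
  stable_implies_popular_general G rank hstrict f hM hstable
end

section
/- Let M be a matching and suppose in the auxiliary graph G_M* there is an M-alternating path v_1 - v_2 - ... - v_k (with v_1v_2, v_{k-1}v_k ∈ M after projecting into G) such that v_1v_k is a blocking edge of G. Then G_M contains an M-alternating cycle through the blocking edge v_1v_k, hence M is not popular. -/
open Finset
open scoped Classical

/-- an alternating path whose first and last edges are matching
edges and whose endpoints are joined by a blocking edge closes to an alternating
cycle of G_M through that blocking edge; hence M is not popular. -/
theorem altpath_blocking_ends_gives_cycle {V : Type*} [Fintype V] [DecidableEq V]
    (G : SimpleGraph V) (rank : V → V → ℕ) (hstrict : StrictPrefs G rank)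
    (f : V → Option V) (hM : IsMatchingOn G f)
    (p : ℕ → V) (n : ℕ) (hn : 1 ≤ n)
    (hpath : AltPath (GMgraph G rank f) f p n)
    (h1 : f (p 0) = some (p 1)) (h2 : f (p (n - 1)) = some (p n))
    (hb : BlockingEdge G rank f (p 0) (p n)) :
    (∃ (q : ℕ → V) (m : ℕ), AltCycle (GMgraph G rank f) f q m ∧
      ∃ i, i < m ∧ BlockingEdge G rank f (q i) (q (i + 1)) ∧
        ((q i = p 0 ∧ q (i + 1) = p n) ∨ (q i = p n ∧ q (i + 1) = p 0))) ∧
    ¬ PopularM G rank f := by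
  classical
  obtain ⟨inj, hadj, halt⟩ := hpath
  have hadjG : ∀ i, i < n → G.Adj (p i) (p (i+1)) := fun i h => (hadj i h).1
  have hwE : ∀ i, i < n → wE rank f (p i) (p (i+1)) ≠ -2 := fun i h => (hadj i h).2
  have hmatch : ∀ i, i < n → (f (p i) = some (p (i+1)) ↔ Even i) := by
    intro i
    induction i with
    | zero => intro _; simpa using h1
    | succ j ih =>
      intro hj
      have hje := ih (by omega)
      have ha := halt j (by omega)
      rw [Nat.even_add_one, ← hje]
      tauto
  have hnodd : Odd n := by
    have he : Even (n-1) := (hmatch (n-1) (by omega)).mp (by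
      rwa [Nat.sub_add_cancel hn])
    rcases he with ⟨k, hk⟩
    exact ⟨k, by omega⟩
  have hn3 : 3 ≤ n := by
    rcases hnodd with ⟨k, hk⟩
    by_contra hc
    have hn1 : n = 1 := by omega
    subst hn1
    exact hb.2.1 h1
  have feven : ∀ i, i < n → Even i → f (p i) = some (p (i+1)) :=
    fun i h he => (hmatch i h).mpr he
  have fodd : ∀ i, i ≤ n → Odd i → f (p i) = some (p (i-1)) := by
    intro i hi ho
    have h1i : 1 ≤ i := by rcases ho with ⟨k, hk⟩; omega
    have he : Even (i-1) := by rcases ho with ⟨k, hk⟩; exact ⟨k, by omega⟩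
    have hfe := feven (i-1) (by omega) he
    rw [show i - 1 + 1 = i from by omega] at hfe
    exact hM.1 _ _ hfe
  have hfn0 : f (p n) ≠ some (p 0) := by
    rw [fodd n le_rfl hnodd]
    intro h
    have := inj (n-1) 0 (by omega) (by omega) (Option.some.inj h)
    omega
  have hbsym : BlockingEdge G rank f (p n) (p 0) :=
    ⟨hb.1.symm, hfn0, hb.2.2.2, hb.2.2.1⟩
  have hclose : (GMgraph G rank f).Adj (p n) (p 0) := by
    refine ⟨hb.1.symm, ?_⟩
    have e1 : vote rank (p n) (some (p 0)) (f (p n)) = 1 := by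
      unfold vote; rw [if_pos hb.2.2.2]
    have e2 : vote rank (p 0) (some (p n)) (f (p 0)) = 1 := by
      unfold vote; rw [if_pos hb.2.2.1]
    unfold wE; rw [e1, e2]; omega
  set q : ℕ → V := fun i => if i = 0 then p n else p (i-1) with hq
  have hq0 : q 0 = p n := by simp [hq]
  have hqs : ∀ i, i ≠ 0 → q i = p (i-1) := by intro i hi; simp [hq, hi]
  have hcyc : AltCycle (GMgraph G rank f) f q (n+1) := by
    refine ⟨by omega, Odd.add_one hnodd, ?_, ?_, ?_, ?_⟩
    · rw [hqs (n+1) (by omega), hq0, Nat.add_sub_cancel]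
    · intro i j hi hj hij
      by_cases hi0 : i = 0 <;> by_cases hj0 : j = 0
      · omega
      · subst hi0
        rw [hq0, hqs j hj0] at hij
        have := inj n (j-1) le_rfl (by omega) hij
        omega
      · subst hj0
        rw [hq0, hqs i hi0] at hij
        have := inj (i-1) n (by omega) le_rfl hij
        omega
      · rw [hqs i hi0, hqs j hj0] at hij
        have := inj (i-1) (j-1) (by omega) (by omega) hij
        omega
    · intro i hi
      by_cases hi0 : i = 0
      · subst hi0
        rw [hq0, hqs 1 one_ne_zero]
        exact hclose
      · rw [hqs i hi0, hqs (i+1) (by omega)]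
        have := hadj (i-1) (by omega)
        rw [show i - 1 + 1 = i from by omega] at this
        rw [show i + 1 - 1 = i from by omega]
        exact this
    · intro i hi
      by_cases hi0 : i = 0
      · subst hi0
        rw [hq0, hqs 1 one_ne_zero]
        simp only [show (1:ℕ) - 1 = 0 from rfl]
        constructor
        · intro h; exact absurd h hfn0
        · intro h; exact absurd h (by decide)
      · rw [hqs i hi0, hqs (i+1) (by omega), show i + 1 - 1 = i from by omega]
        rcases Nat.even_or_odd (i-1) with he | ho
        · have hlt : i - 1 < n := by omega
          have hfe := feven (i-1) hlt he
          rw [show i - 1 + 1 = i from by omega] at hfe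
          rw [hfe]
          simp only [true_iff]
          rcases he with ⟨k, hk⟩
          exact ⟨k, by omega⟩
        · have hfo := fodd (i-1) (by omega) ho
          constructor
          · intro h
            rw [hfo] at h
            have := inj (i-1-1) i (by omega) (by omega) (Option.some.inj h)
            rcases ho with ⟨k, hk⟩
            omega
          · intro hoi
            exfalso
            rcases hoi with ⟨k, hk⟩
            rcases ho with ⟨m, hm⟩
            omega
  -- the auxiliary matching g obtained by switching along the cycle
  have hidx : ∀ (v : V) (h : ∃ i, i ≤ n ∧ p i = v) (i : ℕ), i ≤ n → p i = v →
      h.choose = i := by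
    intro v h i hi hpi
    exact inj _ _ h.choose_spec.1 hi (h.choose_spec.2.trans hpi.symm)
  set gval : ℕ → Option V := fun i =>
    if i = 0 then some (p n) else if i = n then some (p 0)
    else if Odd i then some (p (i+1)) else some (p (i-1)) with hgval
  set g : V → Option V :=
    fun v => if h : ∃ i, i ≤ n ∧ p i = v then gval h.choose else f v with hgdef
  have hg : ∀ i, i ≤ n → g (p i) = gval i := by
    intro i hi
    have hex : ∃ j, j ≤ n ∧ p j = p i := ⟨i, hi, rfl⟩
    simp only [hgdef, dif_pos hex]
    rw [hidx _ hex i hi rfl]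
  have hgoff : ∀ v, ¬ (∃ i, i ≤ n ∧ p i = v) → g v = f v := by
    intro v hv
    simp only [hgdef, dif_neg hv]
  have hg0 : g (p 0) = some (p n) := by
    rw [hg 0 (by omega)]; simp [hgval]
  have hgn : g (p n) = some (p 0) := by
    rw [hg n le_rfl]; simp [hgval, show n ≠ 0 by omega]
  have hgodd : ∀ i, 1 ≤ i → i < n → Odd i → g (p i) = some (p (i+1)) := by
    intro i h1i hin ho
    rw [hg i (by omega)]; simp [hgval, show i ≠ 0 by omega, show i ≠ n by omega, ho]
  have hgeven : ∀ i, 1 ≤ i → i < n → Even i → g (p i) = some (p (i-1)) := by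
    intro i h1i hin he
    rw [hg i (by omega)]; simp [hgval, show i ≠ 0 by omega, show i ≠ n by omega, Nat.not_odd_iff_even.mpr he]
  have hgM : IsMatchingOn G g := by
    constructor
    · intro v w hvw
      by_cases hv : ∃ i, i ≤ n ∧ p i = v
      · obtain ⟨i, hi, rfl⟩ := hv
        rcases Nat.eq_zero_or_pos i with rfl | hipos
        · rw [hg0] at hvw
          have := Option.some.inj hvw; subst this
          exact hgn
        · by_cases hiN : i = n
          · subst hiN
            rw [hgn] at hvw
            have := Option.some.inj hvw; subst this
            exact hg0
          · have hin : i < n := lt_of_le_of_ne hi hiN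
            rcases Nat.even_or_odd i with he | ho
            · rw [hgeven i hipos hin he] at hvw
              have := Option.some.inj hvw; subst this
              have h2i : 2 ≤ i := by rcases he with ⟨k, hk⟩; omega
              have ho' : Odd (i-1) := by rcases he with ⟨k, hk⟩; exact ⟨k-1, by omega⟩
              have := hgodd (i-1) (by omega) (by omega) ho'
              rwa [show i - 1 + 1 = i from by omega] at this
            · rw [hgodd i hipos hin ho] at hvw
              have := Option.some.inj hvw; subst this
              have hi1n : i + 1 < n := by
                rcases ho with ⟨k, hk⟩; rcases hnodd with ⟨m, hm⟩; omega
              have := hgeven (i+1) (by omega) hi1n (Odd.add_one ho)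
              rwa [show i + 1 - 1 = i from by omega] at this
      · rw [hgoff v hv] at hvw
        have hwoff : ¬ ∃ i, i ≤ n ∧ p i = w := by
          rintro ⟨i, hi, rfl⟩
          have hfw := hM.1 _ _ hvw
          rcases Nat.even_or_odd i with he | ho
          · have hin : i < n := by
              rcases he with ⟨k, hk⟩; rcases hnodd with ⟨m, hm⟩; omega
            rw [feven i hin he] at hfw
            exact hv ⟨i+1, by omega, Option.some.inj hfw⟩
          · rw [fodd i hi ho] at hfw
            exact hv ⟨i-1, by omega, Option.some.inj hfw⟩
        rw [hgoff w hwoff]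
        exact hM.1 _ _ hvw
    · intro v w hvw
      by_cases hv : ∃ i, i ≤ n ∧ p i = v
      · obtain ⟨i, hi, rfl⟩ := hv
        rcases Nat.eq_zero_or_pos i with rfl | hipos
        · rw [hg0] at hvw
          have := Option.some.inj hvw; subst this
          exact hb.1
        · by_cases hiN : i = n
          · subst hiN
            rw [hgn] at hvw
            have := Option.some.inj hvw; subst this
            exact hb.1.symm
          · have hin : i < n := lt_of_le_of_ne hi hiN
            rcases Nat.even_or_odd i with he | ho
            · rw [hgeven i hipos hin he] at hvw
              have := Option.some.inj hvw; subst this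
              have := (hadjG (i-1) (by omega)).symm
              rwa [show i - 1 + 1 = i from by omega] at this
            · rw [hgodd i hipos hin ho] at hvw
              have := Option.some.inj hvw; subst this
              exact hadjG i hin
      · rw [hgoff v hv] at hvw
        exact hM.2 _ _ hvw
  -- vote helpers
  have hvote : ∀ v a b, G.Adj v a → G.Adj v b → a ≠ b →
      vote rank v (some a) (some b) = 1 ∨ vote rank v (some a) (some b) = -1 := by
    intro v a b hva hvb hab
    have key : rkv rank v (some a) ≠ rkv rank v (some b) := by
      simp only [rkv]
      intro h
      exact hab (hstrict v a b hva hvb (by exact_mod_cast h))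
    rcases lt_or_gt_of_ne key with h | h
    · left; unfold vote; rw [if_pos h]
    · right; unfold vote; rw [if_neg (asymm h), if_pos h]
  have hvote1 : ∀ v s t, vote rank v s t = 1 → rkv rank v s < rkv rank v t := by
    intro v s t h
    by_contra hc
    unfold vote at h
    rw [if_neg hc] at h
    split_ifs at h <;> omega
  have hvoteneg : ∀ v s t, rkv rank v t < rkv rank v s → vote rank v s t = -1 := by
    intro v s t h
    unfold vote; rw [if_neg (asymm h), if_pos h]
  -- pair lemmas along an odd (non-matching) edge of the path
  have hpair : ∀ i, 1 ≤ i → i < n → Odd i →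
      rkv rank (p i) (f (p i)) < rkv rank (p i) (some (p (i+1))) →
      rkv rank (p (i+1)) (some (p i)) < rkv rank (p (i+1)) (f (p (i+1))) := by
    intro i h1i hin ho hlt
    have hfi : f (p i) = some (p (i-1)) := fodd i (by omega) ho
    have hi1n : i + 1 < n := by
      rcases ho with ⟨k, hk⟩; rcases hnodd with ⟨m, hm⟩; omega
    have hfi1 : f (p (i+1)) = some (p (i+2)) := by
      have := feven (i+1) hi1n (Odd.add_one ho)
      rwa [show i + 1 + 1 = i + 2 from rfl] at this
    have v1 : vote rank (p i) (some (p (i+1))) (f (p i)) = -1 := hvoteneg _ _ _ hlt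
    have hwe := hwE i hin
    have v2cases := hvote (p (i+1)) (p i) (p (i+2)) (hadjG i hin).symm
        (hM.2 _ _ hfi1)
        (fun h => by have := inj i (i+2) (by omega) (by omega) h; omega)
    have v2 : vote rank (p (i+1)) (some (p i)) (some (p (i+2))) = 1 := by
      rcases v2cases with h | h
      · exact h
      · exfalso
        apply hwe
        unfold wE
        rw [v1, hfi1, h]
        norm_num
    refine hvote1 _ _ _ ?_
    rw [hfi1]
    exact v2
  have hpair' : ∀ i, 1 ≤ i → i < n → Odd i →
      rkv rank (p (i+1)) (f (p (i+1))) < rkv rank (p (i+1)) (some (p i)) →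
      rkv rank (p i) (some (p (i+1))) < rkv rank (p i) (f (p i)) := by
    intro i h1i hin ho hlt
    have hfi : f (p i) = some (p (i-1)) := fodd i (by omega) ho
    have hi1n : i + 1 < n := by
      rcases ho with ⟨k, hk⟩; rcases hnodd with ⟨m, hm⟩; omega
    have hfi1 : f (p (i+1)) = some (p (i+2)) := by
      have := feven (i+1) hi1n (Odd.add_one ho)
      rwa [show i + 1 + 1 = i + 2 from rfl] at this
    have v2 : vote rank (p (i+1)) (some (p i)) (f (p (i+1))) = -1 :=
      hvoteneg _ _ _ hlt
    have hwe := hwE i hin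
    have v1cases := hvote (p i) (p (i+1)) (p (i-1)) (hadjG i hin)
        (hM.2 _ _ hfi)
        (fun h => by have := inj (i+1) (i-1) (by omega) (by omega) h; omega)
    have v1 : vote rank (p i) (some (p (i+1))) (some (p (i-1))) = 1 := by
      rcases v1cases with h | h
      · exact h
      · exfalso
        apply hwe
        unfold wE
        rw [hfi, h, v2]
        norm_num
    refine hvote1 _ _ _ ?_
    rw [hfi]
    exact v1
  refine ⟨⟨q, n+1, hcyc, 0, by omega, ?_, ?_⟩, ?_⟩
  · rw [hq0, hqs 1 one_ne_zero]
    exact hbsym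
  · right
    rw [hq0, hqs 1 one_ne_zero]
    exact ⟨rfl, rfl⟩
  intro hpop
  apply hpop g hgM
  unfold MorePopular
  set A := Finset.univ.filter (fun v => rkv rank v (g v) < rkv rank v (f v)) with hA
  set B := Finset.univ.filter (fun v => rkv rank v (f v) < rkv rank v (g v)) with hB
  have hp0A : p 0 ∈ A := by
    rw [hA, Finset.mem_filter]
    exact ⟨Finset.mem_univ _, by rw [hg0]; exact hb.2.2.1⟩
  have hBidx : ∀ v, v ∈ B → ∃ i, 1 ≤ i ∧ i < n ∧ p i = v := by
    intro v hv
    rw [hB, Finset.mem_filter] at hv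
    have hlt := hv.2
    by_cases hc : ∃ i, i ≤ n ∧ p i = v
    · obtain ⟨i, hi, rfl⟩ := hc
      refine ⟨i, ?_, ?_, rfl⟩
      · rcases Nat.eq_zero_or_pos i with rfl | h
        · exfalso
          rw [hg0] at hlt
          exact asymm hb.2.2.1 hlt
        · exact h
      · rcases eq_or_lt_of_le hi with rfl | h
        · exfalso
          rw [hgn] at hlt
          exact asymm hb.2.2.2 hlt
        · exact h
    · rw [hgoff v hc] at hlt
      exact absurd hlt (lt_irrefl _)
  set phi : V → V := fun v =>
    if h : ∃ i, i ≤ n ∧ p i = v then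
      (if Odd h.choose then p (h.choose + 1) else p (h.choose - 1))
    else v with hphidef
  have hphi : ∀ i, i ≤ n → phi (p i) = if Odd i then p (i+1) else p (i-1) := by
    intro i hi
    have hex : ∃ j, j ≤ n ∧ p j = p i := ⟨i, hi, rfl⟩
    simp only [hphidef, dif_pos hex]
    rw [hidx _ hex i hi rfl]
  have hstep : ∀ v ∈ B, phi v ∈ A.erase (p 0) := by
    intro v hv
    obtain ⟨i, h1i, hin, rfl⟩ := hBidx v hv
    rw [hB, Finset.mem_filter] at hv
    have hlt := hv.2
    rcases Nat.even_or_odd i with he | ho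
    · have h2i : 2 ≤ i := by rcases he with ⟨k, hk⟩; omega
      have hio : Odd (i-1) := by rcases he with ⟨k, hk⟩; exact ⟨k-1, by omega⟩
      rw [hgeven i h1i hin he] at hlt
      have hres := hpair' (i-1) (by omega) (by omega) hio (by
        rw [show i - 1 + 1 = i from by omega]
        exact hlt)
      rw [show i - 1 + 1 = i from by omega] at hres
      have hphiv : phi (p i) = p (i-1) := by
        rw [hphi i (by omega), if_neg (Nat.not_odd_iff_even.mpr he)]
      rw [hphiv]
      refine Finset.mem_erase.mpr ⟨?_, ?_⟩
      · intro h
        have := inj (i-1) 0 (by omega) (by omega) h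
        omega
      · rw [hA, Finset.mem_filter]
        refine ⟨Finset.mem_univ _, ?_⟩
        have hge := hgodd (i-1) (by omega) (by omega) hio
        rw [show i - 1 + 1 = i from by omega] at hge
        rw [hge]
        exact hres
    · rw [hgodd i h1i hin ho] at hlt
      have hres := hpair i h1i hin ho hlt
      have hphiv : phi (p i) = p (i+1) := by
        rw [hphi i (by omega), if_pos ho]
      rw [hphiv]
      have hi1n : i + 1 < n := by
        rcases ho with ⟨k, hk⟩; rcases hnodd with ⟨m, hm⟩; omega
      refine Finset.mem_erase.mpr ⟨?_, ?_⟩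
      · intro h
        have := inj (i+1) 0 (by omega) (by omega) h
        omega
      · rw [hA, Finset.mem_filter]
        refine ⟨Finset.mem_univ _, ?_⟩
        have hge := hgeven (i+1) (by omega) hi1n (Odd.add_one ho)
        rw [show i + 1 - 1 = i from by omega] at hge
        rw [hge]
        exact hres
  have hinjOn : ∀ v ∈ B, ∀ w ∈ B, phi v = phi w → v = w := by
    intro v hv w hw hvw
    obtain ⟨i, h1i, hin, rfl⟩ := hBidx v hv
    obtain ⟨j, h1j, hjn, rfl⟩ := hBidx w hw
    rw [hphi i (by omega), hphi j (by omega)] at hvw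
    rcases Nat.even_or_odd i with he | ho <;> rcases Nat.even_or_odd j with he' | ho'
    · rw [if_neg (Nat.not_odd_iff_even.mpr he), if_neg (Nat.not_odd_iff_even.mpr he')] at hvw
      have := inj (i-1) (j-1) (by omega) (by omega) hvw
      have : i = j := by omega
      rw [this]
    · rw [if_neg (Nat.not_odd_iff_even.mpr he), if_pos ho'] at hvw
      have := inj (i-1) (j+1) (by omega) (by omega) hvw
      rcases he with ⟨k, hk⟩; rcases ho' with ⟨m, hm⟩
      omega
    · rw [if_pos ho, if_neg (Nat.not_odd_iff_even.mpr he')] at hvw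
      have := inj (i+1) (j-1) (by omega) (by omega) hvw
      rcases ho with ⟨k, hk⟩; rcases he' with ⟨m, hm⟩
      omega
    · rw [if_pos ho, if_pos ho'] at hvw
      have := inj (i+1) (j+1) (by omega) (by omega) hvw
      have : i = j := by omega
      rw [this]
  have h1c : B.card ≤ (A.erase (p 0)).card := by
    apply Finset.card_le_card_of_injOn phi hstep
    intro a ha b hb' hab
    exact hinjOn a (by simpa using ha) b (by simpa using hb') hab
  have h2c : (A.erase (p 0)).card < A.card := Finset.card_erase_lt_of_mem hp0A
  omega
end

section
/- Let M be a matching and suppose G contains: an M-alternating path P = x - v_1 - M(v_1) - ... - v_k - M(v_k) = r starting with a blocking edge xv_1 (all other non-M edges of P of weight 0), and an odd M-alternating cycle Q through r with V(P) ∩ V(Q) = {r}, all of whose non-M edges have weight 0. Then switching M along P, putting weight 1 on the loop at M(x) and 1/2 on all edges of Q yields a fractional matching p with Σ_e w_M(e)·p_e = 1 > 0; hence M is not fractional popular. -/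
open Finset
open scoped Classical

section AuxHelpers

open Finset

lemma sum_row_one {V : Type*} [Fintype V] [DecidableEq V] (g : V → ℝ) (w0 : V)
    (h : ∀ w, g w = if w = w0 then 1 else 0) : ∑ w, g w = 1 := by
  rw [Finset.sum_congr rfl (fun w _ => h w)]
  simp

lemma sum_row_half {V : Type*} [Fintype V] [DecidableEq V] (g : V → ℝ) (w1 w2 : V)
    (hne : w1 ≠ w2) (h : ∀ w, g w = if w = w1 ∨ w = w2 then 1/2 else 0) : ∑ w, g w = 1 := by
  rw [Finset.sum_congr rfl (fun w _ => h w)]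
  have key : ∀ w : V, (if w = w1 ∨ w = w2 then (1:ℝ)/2 else 0)
      = (if w = w1 then (1:ℝ)/2 else 0) + (if w = w2 then (1:ℝ)/2 else 0) := by
    intro w
    by_cases h1 : w = w1 <;> by_cases h2 : w = w2 <;> simp_all
  rw [Finset.sum_congr rfl (fun w _ => key w), Finset.sum_add_distrib]
  simp
  norm_num

lemma sum_pair_two {V : Type*} [Fintype V] [DecidableEq V] (a b : V) (hab : a ≠ b) :
    ∑ v : V, ∑ w : V, (if (v = a ∧ w = b) ∨ (w = a ∧ v = b) then (2:ℝ) else 0) = 4 := by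
  have key : ∀ v w : V, (if (v = a ∧ w = b) ∨ (w = a ∧ v = b) then (2:ℝ) else 0)
      = (if v = a ∧ w = b then (2:ℝ) else 0) + (if w = a ∧ v = b then (2:ℝ) else 0) := by
    intro v w
    by_cases h1 : v = a ∧ w = b
    · have h2 : ¬ (w = a ∧ v = b) := by
        rintro ⟨rfl, rfl⟩; exact hab h1.1.symm
      rw [if_pos (Or.inl h1), if_pos h1, if_neg h2, add_zero]
    · by_cases h2 : w = a ∧ v = b
      · rw [if_pos (Or.inr h2), if_neg h1, if_pos h2, zero_add]
      · rw [if_neg (by tauto), if_neg h1, if_neg h2, add_zero]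
  simp only [key, Finset.sum_add_distrib, ite_and]
  simp
  norm_num

lemma wE_symm' {V : Type*} [Fintype V] [DecidableEq V] (rank : V → V → ℕ)
    (f : V → Option V) (u v : V) : wE rank f u v = wE rank f v u := by
  unfold wE; exact add_comm _ _

lemma wE_matched' {V : Type*} [Fintype V] [DecidableEq V] (rank : V → V → ℕ)
    (f : V → Option V) (hsym : ∀ a b, f a = some b → f b = some a)
    {u v : V} (h : f u = some v) : wE rank f u v = 0 := by
  have h2 := hsym u v h
  unfold wE vote
  rw [h, h2]
  simp

lemma wE_block' {V : Type*} [Fintype V] [DecidableEq V] (G : SimpleGraph V)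
    (rank : V → V → ℕ) (f : V → Option V) {u v : V}
    (h : BlockingEdge G rank f u v) : wE rank f u v = 2 := by
  obtain ⟨-, -, h1, h2⟩ := h
  unfold wE vote
  rw [if_pos h1, if_pos h2]
  norm_num

end AuxHelpers

/-- an alternating path pf 0 = x, ..., pf (2k) = r starting with a
blocking edge (other non-matching edges of weight 0) together with an odd
alternating cycle qf through r meeting the path only at r (non-matching edges of
weight 0) yields, by switching along the path, putting 1 on the loop at M(x) and
1/2 on the cycle, a fractional matching of value 1; hence M is not fractional
popular. -/
theorem path_plus_odd_cycle_not_frac_popular {V : Type*} [Fintype V] [DecidableEq V]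
    (G : SimpleGraph V) (rank : V → V → ℕ) (hstrict : StrictPrefs G rank)
    (f : V → Option V) (hM : IsMatchingOn G f)
    (pf qf : ℕ → V) (k l : ℕ) (hk : 1 ≤ k) (hl : 1 ≤ l)
    (hinjP : ∀ i j, i ≤ 2 * k → j ≤ 2 * k → pf i = pf j → i = j)
    (hinjQ : ∀ i j, i ≤ 2 * l → j ≤ 2 * l → qf i = qf j → i = j)
    (hr : qf 0 = pf (2 * k)) (hcloseQ : qf (2 * l + 1) = qf 0)
    (hb : BlockingEdge G rank f (pf 0) (pf 1))
    (hMP : ∀ i, i < k → f (pf (2 * i + 1)) = some (pf (2 * i + 2)))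
    (hMQ : ∀ i, i < l → f (qf (2 * i + 1)) = some (qf (2 * i + 2)))
    (hzeroP : ∀ i, 0 < i → i < k →
      G.Adj (pf (2 * i)) (pf (2 * i + 1)) ∧ wE rank f (pf (2 * i)) (pf (2 * i + 1)) = 0)
    (hzeroQ : ∀ i, i ≤ l →
      G.Adj (qf (2 * i)) (qf (2 * i + 1)) ∧ wE rank f (qf (2 * i)) (qf (2 * i + 1)) = 0)
    (hmeet : ∀ i, i ≤ 2 * k → ∀ j, j ≤ 2 * l → pf i = qf j → (i = 2 * k ∧ j = 0))
    (mx : V) (hmx : f (pf 0) = some mx)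
    (hmxP : ∀ i, i ≤ 2 * k → pf i ≠ mx) (hmxQ : ∀ j, j ≤ 2 * l → qf j ≠ mx) :
    let onQ : V → V → Prop := fun a b => ∃ j, j < 2 * l + 1 ∧
      ((a = qf j ∧ b = qf (j + 1)) ∨ (b = qf j ∧ a = qf (j + 1)))
    let onPeven : V → V → Prop := fun a b => ∃ i, i < k ∧
      ((a = pf (2 * i) ∧ b = pf (2 * i + 1)) ∨ (b = pf (2 * i) ∧ a = pf (2 * i + 1)))
    let onPodd : V → V → Prop := fun a b => ∃ i, i < k ∧
      ((a = pf (2 * i + 1) ∧ b = pf (2 * i + 2)) ∨ (b = pf (2 * i + 1) ∧ a = pf (2 * i + 2)))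
    let p : V → V → ℝ := fun a b =>
      if onQ a b then 1 / 2
      else if onPeven a b then 1
      else if onPodd a b then 0
      else if a = b then (if f a = none ∨ a = mx then 1 else 0)
      else if f a = some b ∧ ¬ ((a = pf 0 ∧ b = mx) ∨ (b = pf 0 ∧ a = mx)) then 1 else 0
    FracMatching G p ∧ primalVal rank f p = 1 ∧ ¬ FracPopular G rank f := by
  obtain ⟨k1, rfl⟩ : ∃ k1, k = k1 + 1 := ⟨k - 1, by omega⟩
  obtain ⟨l1, rfl⟩ : ∃ l1, l = l1 + 1 := ⟨l - 1, by omega⟩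
  intro onQ onPeven onPodd p
  have fsym : ∀ a b, f a = some b → f b = some a := hM.1
  have fadj : ∀ a b, f a = some b → G.Adj a b := hM.2
  have hp : ∀ a b, p a b =
      (if onQ a b then (1:ℝ) / 2
      else if onPeven a b then 1
      else if onPodd a b then 0
      else if a = b then (if f a = none ∨ a = mx then 1 else 0)
      else if f a = some b ∧ ¬ ((a = pf 0 ∧ b = mx) ∨ (b = pf 0 ∧ a = mx)) then 1 else 0) :=
    fun _ _ => rfl
  have honQ : ∀ a b, onQ a b ↔ ∃ j, j < 2 * (l1+1) + 1 ∧
      ((a = qf j ∧ b = qf (j + 1)) ∨ (b = qf j ∧ a = qf (j + 1))) := fun _ _ => Iff.rfl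
  have honPe : ∀ a b, onPeven a b ↔ ∃ i, i < k1+1 ∧
      ((a = pf (2 * i) ∧ b = pf (2 * i + 1)) ∨ (b = pf (2 * i) ∧ a = pf (2 * i + 1))) :=
    fun _ _ => Iff.rfl
  have honPo : ∀ a b, onPodd a b ↔ ∃ i, i < k1+1 ∧
      ((a = pf (2 * i + 1) ∧ b = pf (2 * i + 2)) ∨ (b = pf (2 * i + 1) ∧ a = pf (2 * i + 2))) :=
    fun _ _ => Iff.rfl
  -- basic partner facts
  have fPeven : ∀ i, i < k1+1 → f (pf (2*i+2)) = some (pf (2*i+1)) :=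
    fun i hi => fsym _ _ (hMP i hi)
  have fQeven : ∀ i, i < l1+1 → f (qf (2*i+2)) = some (qf (2*i+1)) :=
    fun i hi => fsym _ _ (hMQ i hi)
  have fQ0 : f (qf 0) = some (pf (2*k1+1)) := by
    have h := fPeven k1 (by omega)
    rw [hr, show 2*(k1+1) = 2*k1+2 from by ring]
    exact h
  have hfmx : f mx = some (pf 0) := fsym _ _ hmx
  have h01 : pf 0 ≠ pf 1 := fun he => by
    have := hinjP 0 1 (by omega) (by omega) he; omega
  have fPgen : ∀ m, m ≤ 2*(k1+1) → ∃ u, f (pf m) = some u ∧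
      ((m = 0 ∧ u = mx) ∨ (∃ i, i < k1+1 ∧ m = 2*i+1 ∧ u = pf (2*i+2)) ∨
        (∃ i, i < k1+1 ∧ m = 2*i+2 ∧ u = pf (2*i+1))) := by
    intro m hm
    rcases Nat.even_or_odd m with he | ho
    · rcases Nat.eq_zero_or_pos m with rfl | hpos
      · exact ⟨mx, hmx, Or.inl ⟨rfl, rfl⟩⟩
      · rw [Nat.even_iff] at he
        obtain ⟨i, rfl⟩ : ∃ i, m = 2*i+2 := ⟨m/2 - 1, by omega⟩
        exact ⟨pf (2*i+1), fPeven i (by omega), Or.inr (Or.inr ⟨i, by omega, rfl, rfl⟩)⟩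
    · rw [Nat.odd_iff] at ho
      obtain ⟨i, rfl⟩ : ∃ i, m = 2*i+1 := ⟨m/2, by omega⟩
      exact ⟨pf (2*i+2), hMP i (by omega), Or.inr (Or.inl ⟨i, by omega, rfl, rfl⟩)⟩
  have fQgen : ∀ j, j ≤ 2*(l1+1) → ∃ u, f (qf j) = some u ∧
      ((j = 0 ∧ u = pf (2*k1+1)) ∨ (∃ i, i < l1+1 ∧ j = 2*i+1 ∧ u = qf (2*i+2)) ∨
        (∃ i, i < l1+1 ∧ j = 2*i+2 ∧ u = qf (2*i+1))) := by
    intro j hj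
    rcases Nat.even_or_odd j with he | ho
    · rcases Nat.eq_zero_or_pos j with rfl | hpos
      · exact ⟨pf (2*k1+1), fQ0, Or.inl ⟨rfl, rfl⟩⟩
      · rw [Nat.even_iff] at he
        obtain ⟨i, rfl⟩ : ∃ i, j = 2*i+2 := ⟨j/2 - 1, by omega⟩
        exact ⟨qf (2*i+1), fQeven i (by omega), Or.inr (Or.inr ⟨i, by omega, rfl, rfl⟩)⟩
    · rw [Nat.odd_iff] at ho
      obtain ⟨i, rfl⟩ : ∃ i, j = 2*i+1 := ⟨j/2, by omega⟩
      exact ⟨qf (2*i+2), hMQ i (by omega), Or.inr (Or.inl ⟨i, by omega, rfl, rfl⟩)⟩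
  -- membership lemmas
  have onQmem : ∀ a b, onQ a b →
      (∃ j, j ≤ 2*(l1+1) ∧ a = qf j) ∧ (∃ j, j ≤ 2*(l1+1) ∧ b = qf j) := by
    intro a b hab
    obtain ⟨j, hj, h⟩ := (honQ a b).mp hab
    have hq : ∀ c : V, c = qf (j+1) → ∃ j', j' ≤ 2*(l1+1) ∧ c = qf j' := by
      intro c hc
      by_cases hj2 : j + 1 ≤ 2*(l1+1)
      · exact ⟨j+1, hj2, hc⟩
      · have hje : j = 2*(l1+1) := by omega
        exact ⟨0, by omega, by rw [hc, hje]; exact hcloseQ⟩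
    rcases h with ⟨h1, h2⟩ | ⟨h1, h2⟩
    · exact ⟨⟨j, by omega, h1⟩, hq b h2⟩
    · exact ⟨hq a h2, ⟨j, by omega, h1⟩⟩
  have onPmemE : ∀ a b, onPeven a b →
      (∃ m, m < 2*(k1+1) ∧ a = pf m) ∧ (∃ m, m < 2*(k1+1) ∧ b = pf m) := by
    intro a b hab
    obtain ⟨i, hi, ⟨h1, h2⟩ | ⟨h1, h2⟩⟩ := (honPe a b).mp hab
    · exact ⟨⟨2*i, by omega, h1⟩, ⟨2*i+1, by omega, h2⟩⟩
    · exact ⟨⟨2*i+1, by omega, h2⟩, ⟨2*i, by omega, h1⟩⟩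
  have onPmemO : ∀ a b, onPodd a b →
      (∃ m, 1 ≤ m ∧ m ≤ 2*(k1+1) ∧ a = pf m) ∧ (∃ m, 1 ≤ m ∧ m ≤ 2*(k1+1) ∧ b = pf m) := by
    intro a b hab
    obtain ⟨i, hi, ⟨h1, h2⟩ | ⟨h1, h2⟩⟩ := (honPo a b).mp hab
    · exact ⟨⟨2*i+1, by omega, by omega, h1⟩, ⟨2*i+2, by omega, by omega, h2⟩⟩
    · exact ⟨⟨2*i+2, by omega, by omega, h2⟩, ⟨2*i+1, by omega, by omega, h1⟩⟩
  have hPnotQ : ∀ m, m < 2*(k1+1) → ∀ j, j ≤ 2*(l1+1) → pf m ≠ qf j := by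
    intro m hm j hj heq
    have := hmeet m (by omega) j hj heq
    omega
  have notQ_P : ∀ m, m < 2*(k1+1) → ∀ b, ¬ onQ (pf m) b := by
    intro m hm b hQb
    obtain ⟨⟨j, hj, he⟩, -⟩ := onQmem _ _ hQb
    exact hPnotQ m hm j hj he
  -- generic zero-evaluation of p
  have pzero : ∀ a b, ¬ onQ a b → ¬ onPeven a b →
      (a = b → ¬ (f a = none ∨ a = mx)) →
      (¬ onPodd a b → f a = some b → ((a = pf 0 ∧ b = mx) ∨ (b = pf 0 ∧ a = mx))) →
      p a b = 0 := by
    intro a b h1 h2 h3 h4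
    rw [hp, if_neg h1, if_neg h2]
    by_cases h5 : onPodd a b
    · rw [if_pos h5]
    · rw [if_neg h5]
      by_cases h6 : a = b
      · rw [if_pos h6, if_neg (h3 h6)]
      · rw [if_neg h6, if_neg (fun hc => hc.2 (h4 h5 hc.1))]
  -- symmetry helpers
  have honQs : ∀ a b, onQ a b → onQ b a := by
    intro a b h
    obtain ⟨j, hj, h⟩ := (honQ _ _).mp h
    exact (honQ _ _).mpr ⟨j, hj, h.symm⟩
  have honPes : ∀ a b, onPeven a b → onPeven b a := by
    intro a b h
    obtain ⟨i, hi, h⟩ := (honPe _ _).mp h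
    exact (honPe _ _).mpr ⟨i, hi, h.symm⟩
  have honPos : ∀ a b, onPodd a b → onPodd b a := by
    intro a b h
    obtain ⟨i, hi, h⟩ := (honPo _ _).mp h
    exact (honPo _ _).mpr ⟨i, hi, h.symm⟩
  have psymm : ∀ a b, p a b = p b a := by
    intro a b
    rw [hp, hp]
    by_cases h1 : onQ a b
    · rw [if_pos h1, if_pos (honQs _ _ h1)]
    · rw [if_neg h1, if_neg (fun h => h1 (honQs _ _ h))]
      by_cases h2 : onPeven a b
      · rw [if_pos h2, if_pos (honPes _ _ h2)]
      · rw [if_neg h2, if_neg (fun h => h2 (honPes _ _ h))]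
        by_cases h3 : onPodd a b
        · rw [if_pos h3, if_pos (honPos _ _ h3)]
        · rw [if_neg h3, if_neg (fun h => h3 (honPos _ _ h))]
          by_cases h4 : a = b
          · subst h4; rfl
          · rw [if_neg h4, if_neg (show ¬ b = a from fun h => h4 h.symm)]
            by_cases h5 : f a = some b ∧ ¬ ((a = pf 0 ∧ b = mx) ∨ (b = pf 0 ∧ a = mx))
            · rw [if_pos h5, if_pos ⟨fsym _ _ h5.1, fun hc => h5.2 hc.symm⟩]
            · rw [if_neg h5, if_neg (fun hc => h5 ⟨fsym _ _ hc.1, fun hd => hc.2 hd.symm⟩)]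
  have pnonneg : ∀ a b, 0 ≤ p a b := by
    intro a b
    rw [hp]
    split_ifs <;> norm_num
  -- adjacency of positive-weight pairs
  have adjQ : ∀ a b, onQ a b → G.Adj a b := by
    intro a b h
    obtain ⟨j, hj, h⟩ := (honQ _ _).mp h
    have hadj : G.Adj (qf j) (qf (j+1)) := by
      rcases Nat.even_or_odd j with he | ho
      · rw [Nat.even_iff] at he
        obtain ⟨i, rfl⟩ : ∃ i, j = 2*i := ⟨j/2, by omega⟩
        exact (hzeroQ i (by omega)).1
      · rw [Nat.odd_iff] at ho
        obtain ⟨i, rfl⟩ : ∃ i, j = 2*i+1 := ⟨j/2, by omega⟩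
        rw [show 2*i+1+1 = 2*i+2 from by omega]
        exact fadj _ _ (hMQ i (by omega))
    rcases h with ⟨h1, h2⟩ | ⟨h1, h2⟩
    · rw [h1, h2]; exact hadj
    · rw [h1, h2]; exact hadj.symm
  have adjPe : ∀ a b, onPeven a b → G.Adj a b := by
    intro a b h
    obtain ⟨i, hi, h⟩ := (honPe _ _).mp h
    have hadj : G.Adj (pf (2*i)) (pf (2*i+1)) := by
      rcases Nat.eq_zero_or_pos i with rfl | hipos
      · simpa using hb.1
      · exact (hzeroP i hipos hi).1
    rcases h with ⟨h1, h2⟩ | ⟨h1, h2⟩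
    · rw [h1, h2]; exact hadj
    · rw [h1, h2]; exact hadj.symm
  have pvanish : ∀ v w, v ≠ w → ¬ G.Adj v w → p v w = 0 := by
    intro v w hvw hna
    rw [hp, if_neg (fun h => hna (adjQ _ _ h)), if_neg (fun h => hna (adjPe _ _ h))]
    by_cases h5 : onPodd v w
    · rw [if_pos h5]
    · rw [if_neg h5, if_neg hvw, if_neg (fun hc => hna (fadj _ _ hc.1))]
  -- the degree condition
  have hdeg : ∀ v, ∑ w, p v w = 1 := by
    intro v
    by_cases hvQ : ∃ t, t ≤ 2*(l1+1) ∧ v = qf t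
    · -- v on the cycle
      obtain ⟨t, ht, rfl⟩ := hvQ
      set i1 : ℕ := if t = 0 then 2*(l1+1) else t - 1 with hi1
      set i2 : ℕ := if t = 2*(l1+1) then 0 else t + 1 with hi2
      have hi1le : i1 ≤ 2*(l1+1) := by rw [hi1]; split_ifs <;> omega
      have hi2le : i2 ≤ 2*(l1+1) := by rw [hi2]; split_ifs <;> omega
      have hi12 : i1 ≠ i2 := by rw [hi1, hi2]; split_ifs <;> omega
      have onQchar : ∀ w, onQ (qf t) w ↔ (w = qf i1 ∨ w = qf i2) := by
        intro w
        constructor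
        · intro h
          obtain ⟨j, hj, ⟨h1, h2⟩ | ⟨h1, h2⟩⟩ := (honQ _ _).mp h
          · have hjt : j = t := hinjQ j t (by omega) ht h1.symm
            subst hjt
            by_cases hlast : j = 2*(l1+1)
            · right; rw [hi2, if_pos hlast, h2, hlast]; exact hcloseQ
            · right; rw [hi2, if_neg hlast]; exact h2
          · by_cases hlast : j = 2*(l1+1)
            · have ht0 : t = 0 := by
                apply hinjQ t 0 ht (by omega)
                rw [h2, hlast]; exact hcloseQ
              left; rw [hi1, if_pos ht0, ← hlast]; exact h1
            · have hjt : j + 1 = t := hinjQ (j+1) t (by omega) ht h2.symm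
              left; rw [hi1, if_neg (by omega : ¬ t = 0), h1]
              congr 1; omega
        · intro h
          rcases h with h | h
          · by_cases ht0 : t = 0
            · rw [hi1, if_pos ht0] at h
              exact (honQ _ _).mpr ⟨2*(l1+1), by omega, Or.inr ⟨h, by rw [ht0]; exact hcloseQ.symm⟩⟩
            · rw [hi1, if_neg ht0] at h
              refine (honQ _ _).mpr ⟨t-1, by omega, Or.inr ⟨h, ?_⟩⟩
              congr 1; omega
          · by_cases hlast : t = 2*(l1+1)
            · rw [hi2, if_pos hlast] at h
              exact (honQ _ _).mpr ⟨t, by omega, Or.inl ⟨rfl, by rw [h, hlast]; exact hcloseQ.symm⟩⟩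
            · rw [hi2, if_neg hlast] at h
              exact (honQ _ _).mpr ⟨t, by omega, Or.inl ⟨rfl, h⟩⟩
      obtain ⟨u, hu, hucase⟩ := fQgen t ht
      apply sum_row_half (fun w => p (qf t) w) (qf i1) (qf i2)
        (fun he => hi12 (hinjQ i1 i2 hi1le hi2le he))
      intro w
      by_cases hw : w = qf i1 ∨ w = qf i2
      · rw [if_pos hw, hp, if_pos ((onQchar w).mpr hw)]
      · rw [if_neg hw]
        apply pzero
        · exact fun h => hw ((onQchar w).mp h)
        · intro hPe
          obtain ⟨⟨m, hm, he⟩, -⟩ := onPmemE _ _ hPe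
          exact hPnotQ m hm t ht he.symm
        · intro _
          rintro (hn | hm')
          · rw [hu] at hn; cases hn
          · exact hmxQ t ht hm'
        · intro h5 hf
          have hwu : w = u := by
            rw [hu] at hf; exact (Option.some.inj hf).symm
          exfalso
          rcases hucase with ⟨ht0, hupf⟩ | ⟨i, hi, hti, hue⟩ | ⟨i, hi, hti, hue⟩
          · apply h5
            refine (honPo _ _).mpr ⟨k1, by omega, Or.inr ⟨?_, ?_⟩⟩
            · rw [hwu, hupf]
            · rw [ht0, hr]; congr 1
          · apply hw
            right
            rw [hi2, if_neg (by omega : ¬ t = 2*(l1+1)), hwu, hue]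
            congr 1; omega
          · apply hw
            left
            rw [hi1, if_neg (by omega : ¬ t = 0), hwu, hue]
            congr 1; omega
    · by_cases hvP : ∃ m, m ≤ 2*(k1+1) ∧ v = pf m
      · -- v on the path, not the cycle
        obtain ⟨m, hm, rfl⟩ := hvP
        have hm' : m < 2*(k1+1) := by
          rcases Nat.lt_or_ge m (2*(k1+1)) with h | h
          · exact h
          · exfalso
            have hme : m = 2*(k1+1) := by omega
            exact hvQ ⟨0, by omega, by rw [hme]; exact hr.symm⟩
        by_cases hm0 : m = 0
        · subst hm0
          apply sum_row_one (fun w => p (pf 0) w) (pf 1)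
          intro w
          by_cases hw : w = pf 1
          · rw [if_pos hw, hp, if_neg (notQ_P 0 (by omega) w),
              if_pos ((honPe _ _).mpr ⟨0, by omega, Or.inl ⟨by norm_num, by rw [hw]⟩⟩)]
          · rw [if_neg hw]
            apply pzero
            · exact notQ_P 0 (by omega) w
            · intro hPe
              obtain ⟨i, hi, ⟨h1, h2⟩ | ⟨h1, h2⟩⟩ := (honPe _ _).mp hPe
              · have h2i : (0:ℕ) = 2*i := hinjP 0 (2*i) (by omega) (by omega) h1
                apply hw
                rw [h2, show 2*i+1 = 1 from by omega]
              · have : (0:ℕ) = 2*i+1 := hinjP 0 (2*i+1) (by omega) (by omega) h2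
                omega
            · intro _
              rintro (hn | hm')
              · rw [hmx] at hn; cases hn
              · exact hmxP 0 (by omega) hm'
            · intro _ hf
              rw [hmx] at hf
              exact Or.inl ⟨rfl, (Option.some.inj hf).symm⟩
        · rcases Nat.even_or_odd m with hme | hmo
          · -- m = 2i+2
            rw [Nat.even_iff] at hme
            obtain ⟨i, rfl⟩ : ∃ i, m = 2*i+2 := ⟨m/2 - 1, by omega⟩
            have hik : i < k1 := by omega
            apply sum_row_one (fun w => p (pf (2*i+2)) w) (pf (2*i+3))
            intro w
            by_cases hw : w = pf (2*i+3)
            · rw [if_pos hw, hp, if_neg (notQ_P _ hm' w),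
                if_pos ((honPe _ _).mpr ⟨i+1, by omega,
                  Or.inl ⟨by congr 1, by rw [hw]; congr 1⟩⟩)]
            · rw [if_neg hw]
              apply pzero
              · exact notQ_P _ hm' w
              · intro hPe
                obtain ⟨i', hi', ⟨h1, h2⟩ | ⟨h1, h2⟩⟩ := (honPe _ _).mp hPe
                · have he2 : 2*i+2 = 2*i' := hinjP _ _ (by omega) (by omega) h1
                  apply hw
                  rw [h2]; congr 1; omega
                · have : 2*i+2 = 2*i'+1 := hinjP _ _ (by omega) (by omega) h2
                  omega
              · intro _
                rintro (hn | hm'')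
                · rw [fPeven i (by omega)] at hn; cases hn
                · exact hmxP (2*i+2) (by omega) hm''
              · intro h5 hf
                exfalso
                rw [fPeven i (by omega)] at hf
                have hwe : w = pf (2*i+1) := (Option.some.inj hf).symm
                exact h5 ((honPo _ _).mpr ⟨i, by omega, Or.inr ⟨hwe, rfl⟩⟩)
          · -- m = 2i+1
            rw [Nat.odd_iff] at hmo
            obtain ⟨i, rfl⟩ : ∃ i, m = 2*i+1 := ⟨m/2, by omega⟩
            have hik : i < k1+1 := by omega
            apply sum_row_one (fun w => p (pf (2*i+1)) w) (pf (2*i))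
            intro w
            by_cases hw : w = pf (2*i)
            · rw [if_pos hw, hp, if_neg (notQ_P _ hm' w),
                if_pos ((honPe _ _).mpr ⟨i, hik, Or.inr ⟨hw, rfl⟩⟩)]
            · rw [if_neg hw]
              apply pzero
              · exact notQ_P _ hm' w
              · intro hPe
                obtain ⟨i', hi', ⟨h1, h2⟩ | ⟨h1, h2⟩⟩ := (honPe _ _).mp hPe
                · have : 2*i+1 = 2*i' := hinjP _ _ (by omega) (by omega) h1
                  omega
                · have he2 : 2*i+1 = 2*i'+1 := hinjP _ _ (by omega) (by omega) h2
                  apply hw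
                  rw [h1]; congr 1; omega
              · intro _
                rintro (hn | hm'')
                · rw [hMP i hik] at hn; cases hn
                · exact hmxP (2*i+1) (by omega) hm''
              · intro h5 hf
                exfalso
                rw [hMP i hik] at hf
                have hwe : w = pf (2*i+2) := (Option.some.inj hf).symm
                exact h5 ((honPo _ _).mpr ⟨i, hik, Or.inl ⟨rfl, hwe⟩⟩)
      · -- v not on the path nor the cycle
        have hvnQ : ∀ b, ¬ onQ v b := by
          intro b h
          obtain ⟨⟨j, hj, he⟩, -⟩ := onQmem _ _ h
          exact hvQ ⟨j, hj, he⟩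
        have hvnPe : ∀ b, ¬ onPeven v b := by
          intro b h
          obtain ⟨⟨m, hm, he⟩, -⟩ := onPmemE _ _ h
          exact hvP ⟨m, by omega, he⟩
        have hvnPo : ∀ b, ¬ onPodd v b := by
          intro b h
          obtain ⟨⟨m, hm1, hm2, he⟩, -⟩ := onPmemO _ _ h
          exact hvP ⟨m, hm2, he⟩
        by_cases hvmx : v = mx
        · apply sum_row_one (fun w => p v w) v
          intro w
          by_cases hw : w = v
          · rw [hw, if_pos rfl, hp, if_neg (hvnQ v), if_neg (hvnPe v), if_neg (hvnPo v),
              if_pos rfl, if_pos (Or.inr hvmx)]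
          · rw [if_neg hw]
            apply pzero v w (hvnQ w) (hvnPe w)
            · exact fun he => absurd he.symm hw
            · intro _ hf
              rw [hvmx, hfmx] at hf
              exact Or.inr ⟨(Option.some.inj hf).symm, hvmx⟩
        · by_cases hfv : f v = none
          · apply sum_row_one (fun w => p v w) v
            intro w
            by_cases hw : w = v
            · rw [hw, if_pos rfl, hp, if_neg (hvnQ v), if_neg (hvnPe v), if_neg (hvnPo v),
                if_pos rfl, if_pos (Or.inl hfv)]
            · rw [if_neg hw]
              apply pzero v w (hvnQ w) (hvnPe w)
              · exact fun he => absurd he.symm hw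
              · intro _ hf
                rw [hfv] at hf; cases hf
          · obtain ⟨u, hu⟩ : ∃ u, f v = some u := Option.ne_none_iff_exists'.mp hfv
            have hvu : v ≠ u := by
              intro he
              have hadj := fadj v u hu
              rw [← he] at hadj
              exact G.irrefl hadj
            have hunP : ∀ m, m ≤ 2*(k1+1) → u ≠ pf m := by
              intro m hm he
              have h2 : f (pf m) = some v := by rw [← he]; exact fsym v u hu
              obtain ⟨c, hc, hcase⟩ := fPgen m hm
              have hvc : v = c := by
                rw [hc] at h2; exact (Option.some.inj h2).symm
              rcases hcase with ⟨-, hce⟩ | ⟨i, hi, -, hce⟩ | ⟨i, hi, -, hce⟩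
              · exact hvmx (hvc.trans hce)
              · exact hvP ⟨2*i+2, by omega, hvc.trans hce⟩
              · exact hvP ⟨2*i+1, by omega, hvc.trans hce⟩
            have hunQ : ∀ j, j ≤ 2*(l1+1) → u ≠ qf j := by
              intro j hj he
              have h2 : f (qf j) = some v := by rw [← he]; exact fsym v u hu
              obtain ⟨c, hc, hcase⟩ := fQgen j hj
              have hvc : v = c := by
                rw [hc] at h2; exact (Option.some.inj h2).symm
              rcases hcase with ⟨-, hce⟩ | ⟨i, hi, -, hce⟩ | ⟨i, hi, -, hce⟩
              · exact hvP ⟨2*k1+1, by omega, hvc.trans hce⟩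
              · exact hvQ ⟨2*i+2, by omega, hvc.trans hce⟩
              · exact hvQ ⟨2*i+1, by omega, hvc.trans hce⟩
            have humx : u ≠ mx := by
              intro he
              rw [he] at hu
              have h2 := fsym v mx hu
              rw [hfmx] at h2
              exact hvP ⟨0, by omega, (Option.some.inj h2).symm⟩
            apply sum_row_one (fun w => p v w) u
            intro w
            have hcond : ¬ ((v = pf 0 ∧ u = mx) ∨ (u = pf 0 ∧ v = mx)) := by
              rintro (⟨he1, -⟩ | ⟨-, he2⟩)
              · exact hvP ⟨0, by omega, he1⟩
              · exact hvmx he2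
            by_cases hw : w = u
            · rw [if_pos hw, hp, if_neg (hvnQ w), if_neg (hvnPe w), if_neg (hvnPo w),
                if_neg (by rw [hw]; exact hvu),
                if_pos ⟨by rw [hw]; exact hu, by rw [hw]; exact hcond⟩]
            · rw [if_neg hw]
              apply pzero v w (hvnQ w) (hvnPe w)
              · intro _
                rintro (hn | hm')
                · exact hfv hn
                · exact hvmx hm'
              · intro _ hf
                rw [hu] at hf
                exact absurd (Option.some.inj hf).symm hw
  -- the diagonal of p
  have hdiagp : ∀ v, p v v = if f v = none ∨ v = mx then 1 else 0 := by
    intro v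
    have h1 : ¬ onQ v v := by
      intro h
      obtain ⟨j, hj, h⟩ := (honQ _ _).mp h
      have he : qf j = qf (j+1) := by
        rcases h with ⟨ha, hb⟩ | ⟨ha, hb⟩ <;> rw [← ha, ← hb]
      by_cases hlast : j = 2*(l1+1)
      · rw [hlast] at he
        have := hinjQ (2*(l1+1)) 0 (by omega) (by omega) (he.trans hcloseQ)
        omega
      · have := hinjQ j (j+1) (by omega) (by omega) he
        omega
    have h2 : ¬ onPeven v v := by
      intro h
      obtain ⟨i, hi, h⟩ := (honPe _ _).mp h
      have he : pf (2*i) = pf (2*i+1) := by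
        rcases h with ⟨ha, hb⟩ | ⟨ha, hb⟩ <;> rw [← ha, ← hb]
      have := hinjP (2*i) (2*i+1) (by omega) (by omega) he
      omega
    have h3 : ¬ onPodd v v := by
      intro h
      obtain ⟨i, hi, h⟩ := (honPo _ _).mp h
      have he : pf (2*i+1) = pf (2*i+2) := by
        rcases h with ⟨ha, hb⟩ | ⟨ha, hb⟩ <;> rw [← ha, ← hb]
      have := hinjP (2*i+1) (2*i+2) (by omega) (by omega) he
      omega
    rw [hp, if_neg h1, if_neg h2, if_neg h3, if_pos rfl]
  have hwLp : ∀ v, (wL f v : ℝ) * p v v = if v = mx then (-1:ℝ) else 0 := by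
    intro v
    rw [hdiagp v]
    simp only [wL]
    by_cases hn : f v = none
    · rw [if_pos hn, if_pos (Or.inl hn),
        if_neg (fun he => by rw [he, hfmx] at hn; cases hn)]
      norm_num
    · rw [if_neg hn]
      by_cases hm' : v = mx
      · rw [if_pos (Or.inr hm'), if_pos hm']
        norm_num
      · rw [if_neg (fun hc => hc.elim hn hm'), if_neg hm']
        norm_num
  have hL : ∑ v, (wL f v : ℝ) * p v v = -1 := by
    rw [Finset.sum_congr rfl (fun v _ => hwLp v)]
    simp
  have hE : ∀ v w, (if v ≠ w then (wE rank f v w : ℝ) * p v w else 0) =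
      if (v = pf 0 ∧ w = pf 1) ∨ (w = pf 0 ∧ v = pf 1) then 2 else 0 := by
    intro v w
    by_cases hvw : v = w
    · rw [if_neg (by simpa using hvw), if_neg]
      rintro (⟨he1, he2⟩ | ⟨he1, he2⟩)
      · exact h01 (by rw [← he1, hvw]; exact he2)
      · exact h01 (by rw [← he1, ← hvw]; exact he2)
    · rw [if_pos hvw, hp]
      by_cases hQ : onQ v w
      · rw [if_pos hQ]
        have hwE : wE rank f v w = 0 := by
          obtain ⟨j, hj, h⟩ := (honQ _ _).mp hQ
          have h0 : wE rank f (qf j) (qf (j+1)) = 0 := by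
            rcases Nat.even_or_odd j with he | ho
            · rw [Nat.even_iff] at he
              obtain ⟨i, rfl⟩ : ∃ i, j = 2*i := ⟨j/2, by omega⟩
              exact (hzeroQ i (by omega)).2
            · rw [Nat.odd_iff] at ho
              obtain ⟨i, rfl⟩ : ∃ i, j = 2*i+1 := ⟨j/2, by omega⟩
              rw [show 2*i+1+1 = 2*i+2 from by omega]
              exact wE_matched' rank f fsym (hMQ i (by omega))
          rcases h with ⟨h1, h2⟩ | ⟨h1, h2⟩
          · rw [h1, h2]; exact h0
          · rw [h1, h2, wE_symm']; exact h0
        have hnp : ¬ ((v = pf 0 ∧ w = pf 1) ∨ (w = pf 0 ∧ v = pf 1)) := by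
          obtain ⟨⟨j, hj, hv⟩, -⟩ := onQmem _ _ hQ
          rintro (⟨he1, -⟩ | ⟨-, he1⟩)
          · have := hmeet 0 (by omega) j hj (by rw [← he1]; exact hv)
            omega
          · have := hmeet 1 (by omega) j hj (by rw [← he1]; exact hv)
            omega
        rw [if_neg hnp, hwE]
        norm_num
      · rw [if_neg hQ]
        by_cases hPe : onPeven v w
        · rw [if_pos hPe]
          obtain ⟨i, hi, h⟩ := (honPe _ _).mp hPe
          rcases Nat.eq_zero_or_pos i with rfl | hipos
          · have hwE : wE rank f v w = 2 := by
              rcases h with ⟨h1, h2⟩ | ⟨h1, h2⟩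
              · rw [h1, h2]; simpa using wE_block' G rank f hb
              · rw [h1, h2, wE_symm']; simpa using wE_block' G rank f hb
            have hpair : (v = pf 0 ∧ w = pf 1) ∨ (w = pf 0 ∧ v = pf 1) := by
              rcases h with ⟨h1, h2⟩ | ⟨h1, h2⟩
              · exact Or.inl ⟨by simpa using h1, by simpa using h2⟩
              · exact Or.inr ⟨by simpa using h1, by simpa using h2⟩
            rw [if_pos hpair, hwE]
            norm_num
          · have hwE : wE rank f v w = 0 := by
              rcases h with ⟨h1, h2⟩ | ⟨h1, h2⟩
              · rw [h1, h2]; exact (hzeroP i hipos hi).2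
              · rw [h1, h2, wE_symm']; exact (hzeroP i hipos hi).2
            have hnp : ¬ ((v = pf 0 ∧ w = pf 1) ∨ (w = pf 0 ∧ v = pf 1)) := by
              rintro (⟨he1, he2⟩ | ⟨he1, he2⟩) <;>
                rcases h with ⟨h1, h2⟩ | ⟨h1, h2⟩
              · have := hinjP 0 (2*i) (by omega) (by omega) (by rw [← he1]; exact h1)
                omega
              · have := hinjP 0 (2*i+1) (by omega) (by omega) (by rw [← he1]; exact h2)
                omega
              · have := hinjP 1 (2*i) (by omega) (by omega) (by rw [← he2]; exact h1)
                omega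
              · have := hinjP 1 (2*i+1) (by omega) (by omega) (by rw [← he2]; exact h2)
                omega
            rw [if_neg hnp, hwE]
            norm_num
        · rw [if_neg hPe]
          have hnp : ¬ ((v = pf 0 ∧ w = pf 1) ∨ (w = pf 0 ∧ v = pf 1)) := by
            rintro (⟨he1, he2⟩ | ⟨he1, he2⟩)
            · exact hPe ((honPe _ _).mpr ⟨0, by omega,
                Or.inl ⟨by simpa using he1, by simpa using he2⟩⟩)
            · exact hPe ((honPe _ _).mpr ⟨0, by omega,
                Or.inr ⟨by simpa using he1, by simpa using he2⟩⟩)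
          rw [if_neg hnp]
          by_cases hPo : onPodd v w
          · rw [if_pos hPo, mul_zero]
          · rw [if_neg hPo, if_neg hvw]
            by_cases hMt : f v = some w ∧ ¬ ((v = pf 0 ∧ w = mx) ∨ (w = pf 0 ∧ v = mx))
            · rw [if_pos hMt, wE_matched' rank f fsym hMt.1]
              norm_num
            · rw [if_neg hMt, mul_zero]
  have hS : ∑ v, ∑ w, (if v ≠ w then (wE rank f v w : ℝ) * p v w else 0) = 4 := by
    rw [Finset.sum_congr rfl (fun v _ => Finset.sum_congr rfl (fun w _ => hE v w))]
    exact sum_pair_two (pf 0) (pf 1) h01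
  have hval : primalVal rank f p = 1 := by
    unfold primalVal
    rw [hS, hL]
    norm_num
  have hFM : FracMatching G p := ⟨psymm, pnonneg, pvanish, hdeg⟩
  refine ⟨hFM, hval, ?_⟩
  intro hpop
  have := hpop p hFM
  rw [hval] at this
  linarith
end
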